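/- Let g > 2 be an integer and let W be the group with presentation ⟨A, B, C | A² = B^{4g} = C⁴ = ABC = C²B^{2g} = 1⟩. Then the element B^{2g}A of W has order 2. -/

import Mathlib

/-- Relators of the Wiman type II group
⟨A, B, C | A² = B^{4g} = C⁴ = ABC = C²B^{2g} = 1⟩, with generators
A, B, C represented by `FreeGroup.of 0`, `FreeGroup.of 1`, `FreeGroup.of 2`. -/
def wimanRels (g : ℕ) : Set (FreeGroup (Fin 3)) :=
  {FreeGroup.of 0 ^ 2, FreeGroup.of 1 ^ (4 * g), FreeGroup.of 2 ^ 4,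
   FreeGroup.of 0 * FreeGroup.of 1 * FreeGroup.of 2,
   FreeGroup.of 2 ^ 2 * FreeGroup.of 1 ^ (2 * g)}

/-!
From `ABC = 1` we get `C⁻¹ = AB`, so the last relator says `B^{2g} = (AB)²`. Since `B` commutes
with its own power, `BABA = ABAB`, and together with `A² = 1` this makes `A` commute with `(AB)²`.
Hence `(B^{2g}A)² = B^{4g}A² = 1`. The element is not trivial because `A ↦ -1, B ↦ 1, C ↦ -1`
respects all relators, so it defines a homomorphism to `ℤˣ` sending `B^{2g}A` to `-1`.
-/

section
variable {G : Type*} [Group G]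

theorem Commute.sq_mul_of_sq_eq_one {a b : G} (ha : a ^ 2 = 1) (hb : Commute b ((a * b) ^ 2)) :
    Commute a ((a * b) ^ 2) := by
  have ha' : a * a = 1 := by rw [← sq, ha]
  have hbaba : b * a * b * a = a * b * a * b := by
    apply mul_right_cancel (b := b)
    simpa only [sq, mul_assoc] using hb.eq
  calc a * (a * b) ^ 2 = b * a * b := by rw [sq]; simp only [← mul_assoc, ha', one_mul]
    _ = b * a * b * a * a := by simp only [mul_assoc, ha', mul_one]
    _ = (a * b) ^ 2 * a := by rw [hbaba, sq]; simp only [mul_assoc]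

theorem pow_mul_sq_eq_pow_two_mul {a b c : G} {n : ℕ} (ha : a ^ 2 = 1) (habc : a * b * c = 1)
    (hc : c ^ 2 * b ^ n = 1) : (b ^ n * a) ^ 2 = b ^ (2 * n) := by
  have hbn : b ^ n = (a * b) ^ 2 := by
    rw [eq_inv_of_mul_eq_one_right hc, ← inv_pow, inv_eq_of_mul_eq_one_left habc]
  have hcomm : Commute a (b ^ n) :=
    hbn ▸ Commute.sq_mul_of_sq_eq_one ha (hbn ▸ Commute.self_pow b n)
  rw [hcomm.symm.mul_pow, ha, mul_one, ← pow_mul, mul_comm]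

end

namespace Wiman

open PresentedGroup

def sign (g : ℕ) : PresentedGroup (wimanRels g) →* ℤˣ :=
  toGroup (f := ![-1, 1, -1]) (by
    rintro r (rfl | rfl | rfl | rfl | rfl) <;> simp [pow_mul, Nat.even_iff])

variable {g : ℕ}

lemma of_zero_sq : (of 0 : PresentedGroup (wimanRels g)) ^ 2 = 1 := by
  rw [of, ← map_pow]; exact one_of_mem (by simp [wimanRels])

lemma of_one_pow : (of 1 : PresentedGroup (wimanRels g)) ^ (4 * g) = 1 := by
  rw [of, ← map_pow]; exact one_of_mem (by simp [wimanRels])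

lemma of_mul_of_mul_of : (of 0 * of 1 * of 2 : PresentedGroup (wimanRels g)) = 1 := by
  simp only [of, ← map_mul]; exact one_of_mem (by simp [wimanRels])

lemma of_two_sq_mul_of_one_pow :
    (of 2 ^ 2 * of 1 ^ (2 * g) : PresentedGroup (wimanRels g)) = 1 := by
  simp only [of, ← map_pow, ← map_mul]; exact one_of_mem (by simp [wimanRels])

end Wiman

theorem stmt_11_general (g : ℕ)
    (A B : PresentedGroup (wimanRels g))
    (hA : A = PresentedGroup.of 0) (hB : B = PresentedGroup.of 1) :
    orderOf (B ^ (2 * g) * A) = 2 := by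
  subst hA hB
  refine orderOf_eq_prime ?_ fun h ↦ ?_
  · rw [pow_mul_sq_eq_pow_two_mul Wiman.of_zero_sq Wiman.of_mul_of_mul_of
      Wiman.of_two_sq_mul_of_one_pow, ← mul_assoc]
    exact Wiman.of_one_pow
  · have := congrArg (Wiman.sign g) h
    simp [Wiman.sign] at this

theorem stmt_11 (g : ℕ) (hg : 2 < g)
    (A B : PresentedGroup (wimanRels g))
    (hA : A = PresentedGroup.of 0) (hB : B = PresentedGroup.of 1) :
    orderOf (B ^ (2 * g) * A) = 2 :=
  stmt_11_general g A B hA hB
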